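/- A family (P_T)_{T∈ℕ} of Borel probability measures on H is tight if and only if both of the following hold: (i) for every k ≥ 1, lim_{h→∞} sup_{T∈ℕ} P_T({x ∈ H : Σ_{n<k} |⟨x, e_n⟩|² > h}) = 0; and (ii) for every ε > 0, lim_{k→∞} sup_{T∈ℕ} P_T({x ∈ H : Σ_{n≥k} |⟨x, e_n⟩|² > ε}) = 0. -/

import Mathlib

/-! A Hilbert basis describes the compact subsets of `H`: a closed bounded set is compact as soon as
the tails `∑_{n ≥ k} ‖⟪e n, x⟫‖²` tend to `0` uniformly on it, since up to a small error its points
are then finite expansions with bounded coefficients; conversely the tails decrease to `0` and are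
continuous, so Dini's theorem makes them uniformly small on every compact set. Hence every compact
set eventually avoids the sets `{h < ∑_{n < k} ‖⟪e n, x⟫‖²}` and `{ε < ∑_{n ≥ k} ‖⟪e n, x⟫‖²}`,
which gives (i) and (ii) for a tight family; and conversely, removing countably many such sets
whose masses have a sum below `δ` leaves a compact set. -/

open MeasureTheory Filter
open scoped ENNReal Topology

theorem Metric.totallyBounded_of_forall_exists_totallyBounded {X : Type*} [PseudoMetricSpace X]
    {s : Set X} (h : ∀ ε > 0, ∃ t : Set X, TotallyBounded t ∧ ∀ x ∈ s, ∃ y ∈ t, dist x y < ε) :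
    TotallyBounded s := by
  refine Metric.totallyBounded_iff.mpr fun ε hε => ?_
  obtain ⟨t, ht, hst⟩ := h (ε / 2) (half_pos hε)
  obtain ⟨u, hu, htu⟩ := Metric.totallyBounded_iff.mp ht (ε / 2) (half_pos hε)
  refine ⟨u, hu, fun x hx => ?_⟩
  obtain ⟨y, hyt, hxy⟩ := hst x hx
  obtain ⟨z, hzu, hyz⟩ := Set.mem_iUnion₂.mp (htu hyt)
  refine Set.mem_iUnion₂.mpr ⟨z, hzu, ?_⟩
  calc dist x z ≤ dist x y + dist y z := dist_triangle x y z
    _ < ε / 2 + ε / 2 := add_lt_add hxy hyz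
    _ = ε := add_halves ε

namespace MeasureTheory

theorem IsTightMeasureSet.tendsto_iSup_measure {X α : Type*} [TopologicalSpace X]
    [MeasurableSpace X] {S : Set (Measure X)} (hS : IsTightMeasureSet S) {l : Filter α}
    {s : α → Set X} (hs : Tendsto s l (cocompact X).smallSets) :
    Tendsto (fun a => ⨆ μ ∈ S, μ (s a)) l (𝓝 0) := by
  convert hS.comp hs with a
  simp

theorem isTightMeasureSet_range_iff_ofReal_le {X ι : Type*} [TopologicalSpace X] [T2Space X]
    [MeasurableSpace X] [OpensMeasurableSpace X] (P : ι → Measure X)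
    [∀ i, IsProbabilityMeasure (P i)] :
    IsTightMeasureSet (Set.range P) ↔
      ∀ δ : ℝ, 0 < δ → ∃ K : Set X, IsCompact K ∧ ∀ i, ENNReal.ofReal (1 - δ) ≤ P i K := by
  have hcompl : ∀ {K : Set X} (δ : ℝ), 0 ≤ δ → IsCompact K → ∀ i,
      ENNReal.ofReal (1 - δ) ≤ P i K ↔ P i Kᶜ ≤ ENNReal.ofReal δ := fun δ hδ hK i => by
    rw [prob_compl_eq_one_sub hK.measurableSet, ENNReal.ofReal_sub 1 hδ, ENNReal.ofReal_one,
      tsub_le_iff_tsub_le]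
  rw [isTightMeasureSet_iff_exists_isCompact_measure_compl_le]
  simp only [Set.forall_mem_range]
  constructor
  · intro h δ hδ
    obtain ⟨K, hK, hPK⟩ := h _ (ENNReal.ofReal_pos.mpr hδ)
    exact ⟨K, hK, fun i => (hcompl δ hδ.le hK i).mpr (hPK i)⟩
  · intro h ε hε
    obtain ⟨δ, hδ, hδε⟩ : ∃ δ : ℝ, 0 < δ ∧ ENNReal.ofReal δ ≤ ε := by
      obtain ⟨δ, -, hδ, hδε⟩ := ENNReal.lt_iff_exists_real_btwn.mp hε
      exact ⟨δ, ENNReal.ofReal_pos.mp hδ, hδε.le⟩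
    obtain ⟨K, hK, hPK⟩ := h δ hδ
    exact ⟨K, hK, fun i => ((hcompl δ hδ.le hK i).mp (hPK i)).trans hδε⟩

end MeasureTheory

namespace HilbertBasis

variable {𝕜 : Type*} [RCLike 𝕜] {H : Type*} [NormedAddCommGroup H] [InnerProductSpace 𝕜 H]
  (e : HilbertBasis ℕ 𝕜 H)

noncomputable def partialNormSq (k : ℕ) (x : H) : ℝ :=
  ∑ n ∈ Finset.range k, ‖inner 𝕜 (e n) x‖ ^ 2

noncomputable def tailNormSq (k : ℕ) (x : H) : ℝ :=
  ∑' n : ℕ, if k ≤ n then ‖inner 𝕜 (e n) x‖ ^ 2 else 0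

theorem hasSum_norm_inner_sq (x : H) : HasSum (fun n => ‖inner 𝕜 (e n) x‖ ^ 2) (‖x‖ ^ 2) := by
  simpa [e.repr_apply_apply] using lp.hasSum_norm (p := 2) (by norm_num) (e.repr x)

theorem tailNormSq_eq (k : ℕ) (x : H) : e.tailNormSq k x = ‖x‖ ^ 2 - e.partialNormSq k x := by
  have hhead : HasSum (fun n => if n < k then ‖inner 𝕜 (e n) x‖ ^ 2 else 0)
      (e.partialNormSq k x) := by
    convert hasSum_sum_of_ne_finset_zero (L := SummationFilter.unconditional ℕ)
      (s := Finset.range k) (fun n hn => if_neg ?_) using 1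
    · exact Finset.sum_congr rfl fun n hn => (if_pos (Finset.mem_range.mp hn)).symm
    · simpa using hn
  refine HasSum.tsum_eq ?_
  convert (e.hasSum_norm_inner_sq x).sub hhead using 1
  · rfl
  · funext n
    split_ifs <;> first | omega | simp

theorem partialNormSq_le_norm_sq (k : ℕ) (x : H) : e.partialNormSq k x ≤ ‖x‖ ^ 2 :=
  sum_le_hasSum _ (fun _ _ => by positivity) (e.hasSum_norm_inner_sq x)

theorem continuous_partialNormSq (k : ℕ) : Continuous (e.partialNormSq k) :=
  continuous_finsetSum _ fun n _ => ((innerSL 𝕜 (e n)).continuous.norm).pow 2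

theorem continuous_tailNormSq (k : ℕ) : Continuous (e.tailNormSq k) := by
  simp only [funext (e.tailNormSq_eq k)]
  exact (continuous_norm.pow 2).sub (e.continuous_partialNormSq k)

theorem antitone_tailNormSq (x : H) : Antitone fun k => e.tailNormSq k x := fun k l hkl => by
  simp only [tailNormSq_eq]
  exact sub_le_sub_left (Finset.sum_le_sum_of_subset_of_nonneg
    (Finset.range_subset_range.mpr hkl) fun _ _ _ => by positivity) _

theorem tendsto_tailNormSq (x : H) : Tendsto (fun k => e.tailNormSq k x) atTop (𝓝 0) := by
  simp only [tailNormSq_eq]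
  rw [← sub_self (‖x‖ ^ 2)]
  exact tendsto_const_nhds.sub (e.hasSum_norm_inner_sq x).tendsto_sum_nat

theorem tailNormSq_eq_norm_sub_sq (k : ℕ) (x : H) :
    e.tailNormSq k x = ‖x - ∑ n ∈ Finset.range k, inner 𝕜 (e n) x • e n‖ ^ 2 := by
  set y := x - ∑ n ∈ Finset.range k, inner 𝕜 (e n) x • e n
  have hy : ∀ n, inner 𝕜 (e n) y = if k ≤ n then inner 𝕜 (e n) x else 0 := by
    intro n
    simp only [y, inner_sub_right, inner_sum, inner_smul_right,
      orthonormal_iff_ite.mp e.orthonormal, mul_ite, mul_one, mul_zero, Finset.sum_ite_eq,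
      Finset.mem_range]
    split_ifs <;> first | omega | simp
  rw [← (e.hasSum_norm_inner_sq y).tsum_eq, tailNormSq]
  congr 1 with n
  rw [hy]
  split_ifs <;> simp

theorem tendstoUniformlyOn_tailNormSq {K : Set H} (hK : IsCompact K) :
    TendstoUniformlyOn e.tailNormSq 0 atTop K :=
  Antitone.tendstoUniformlyOn_of_forall_tendsto hK
    (fun k => (e.continuous_tailNormSq k).continuousOn) (fun x _ => e.antitone_tailNormSq x)
    continuousOn_const fun x _ => e.tendsto_tailNormSq x

theorem isCompact_of_forall_exists_tailNormSq_lt [CompleteSpace H] {K : Set H} (hc : IsClosed K)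
    (hb : Bornology.IsBounded K) (ht : ∀ ε > 0, ∃ k, ∀ x ∈ K, e.tailNormSq k x < ε) :
    IsCompact K := by
  refine TotallyBounded.isCompact_of_isClosed
    (Metric.totallyBounded_of_forall_exists_totallyBounded fun ε hε => ?_) hc
  obtain ⟨R, hR⟩ := hb.exists_norm_le
  obtain ⟨k, hk⟩ := ht (ε ^ 2) (by positivity)
  let f : (Fin k → 𝕜) → H := fun c => ∑ i, c i • e i
  refine ⟨f '' Metric.closedBall 0 R,
    ((isCompact_closedBall 0 R).image (by fun_prop)).totallyBounded, fun x hx =>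
    ⟨_, ⟨fun i => inner 𝕜 (e i) x, ?_, rfl⟩, ?_⟩⟩
  · have hxR := hR x hx
    rw [mem_closedBall_zero_iff, pi_norm_le_iff_of_nonneg ((norm_nonneg x).trans hxR)]
    intro i
    calc ‖inner 𝕜 (e i) x‖ ≤ ‖e i‖ * ‖x‖ := norm_inner_le_norm _ _
      _ = ‖x‖ := by rw [e.orthonormal.1, one_mul]
      _ ≤ R := hxR
  · rw [dist_eq_norm,
      show f _ = _ from Fin.sum_univ_eq_sum_range (fun n => inner 𝕜 (e n) x • e n) k]
    refine lt_of_pow_lt_pow_left₀ 2 hε.le ?_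
    rw [← tailNormSq_eq_norm_sub_sq]
    exact hk x hx

theorem tendsto_setOf_lt_partialNormSq_smallSets (k : ℕ) :
    Tendsto (fun h : ℝ => {x | h < e.partialNormSq k x}) atTop (cocompact H).smallSets := by
  refine hasBasis_cocompact.smallSets.tendsto_right_iff.mpr fun K hK => ?_
  obtain ⟨R, hR⟩ := hK.isBounded.exists_norm_le
  filter_upwards [eventually_ge_atTop (R ^ 2)] with h hh x hx hxK
  have hxR : ‖x‖ ^ 2 ≤ R ^ 2 := pow_le_pow_left₀ (norm_nonneg x) (hR x hxK) 2
  exact (hx.trans_le ((e.partialNormSq_le_norm_sq k x).trans (hxR.trans hh))).false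

theorem tendsto_setOf_lt_tailNormSq_smallSets {ε : ℝ} (hε : 0 < ε) :
    Tendsto (fun k => {x | ε < e.tailNormSq k x}) atTop (cocompact H).smallSets := by
  refine hasBasis_cocompact.smallSets.tendsto_right_iff.mpr fun K hK => ?_
  filter_upwards [Metric.tendstoUniformlyOn_iff.mp (e.tendstoUniformlyOn_tailNormSq hK) ε hε]
    with k hk x hx hxK
  have := hk x hxK
  rw [Pi.zero_apply, dist_zero_left, Real.norm_eq_abs] at this
  exact ((le_abs_self _).trans_lt this).not_gt hx

theorem isCompact_partialNormSq_le_inter_iInter_tailNormSq_le [CompleteSpace H] (h : ℝ)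
    (k : ℕ → ℕ) {r : ℕ → ℝ} (hr : Tendsto r atTop (𝓝 0)) :
    IsCompact ({x | e.partialNormSq (k 0) x ≤ h} ∩ ⋂ j, {x | e.tailNormSq (k j) x ≤ r j}) := by
  refine e.isCompact_of_forall_exists_tailNormSq_lt ?_ ?_ fun ε hε => ?_
  · exact (isClosed_le (e.continuous_partialNormSq _) continuous_const).inter
      (isClosed_iInter fun j => isClosed_le (e.continuous_tailNormSq _) continuous_const)
  · refine isBounded_iff_forall_norm_le.mpr ⟨√(h + r 0), fun x hx => ?_⟩
    have hsq : ‖x‖ ^ 2 ≤ h + r 0 := by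
      rw [← add_sub_cancel (e.partialNormSq (k 0) x) (‖x‖ ^ 2), ← tailNormSq_eq]
      exact add_le_add hx.1 (Set.mem_iInter.mp hx.2 0)
    exact (le_abs_self _).trans (Real.abs_le_sqrt hsq)
  · obtain ⟨j, hj⟩ := (hr.eventually (gt_mem_nhds hε)).exists
    exact ⟨k j, fun x hx => (Set.mem_iInter.mp hx.2 j).trans_lt hj⟩

theorem isTightMeasureSet_of_tendsto [CompleteSpace H] [MeasurableSpace H] {S : Set (Measure H)}
    (hhead : ∀ k, Tendsto (fun h : ℝ => ⨆ μ ∈ S, μ {x | h < e.partialNormSq k x}) atTop (𝓝 0))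
    (htail : ∀ ε > 0, Tendsto (fun k => ⨆ μ ∈ S, μ {x | ε < e.tailNormSq k x}) atTop (𝓝 0)) :
    IsTightMeasureSet S := by
  refine isTightMeasureSet_iff_exists_isCompact_measure_compl_le.mpr fun ε hε => ?_
  obtain ⟨c, hc0, hc⟩ := ENNReal.exists_pos_sum_of_countable' hε.ne' ℕ
  choose k hk using fun j : ℕ =>
    ((htail (1 / ((j : ℝ) + 1)) Nat.one_div_pos_of_nat).eventually_lt_const (hc0 (j + 1))).exists
  obtain ⟨h, hh⟩ := ((hhead (k 0)).eventually_lt_const (hc0 0)).exists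
  refine ⟨_, e.isCompact_partialNormSq_le_inter_iInter_tailNormSq_le h k
    tendsto_one_div_add_atTop_nhds_zero_nat, fun μ hμ => ?_⟩
  simp only [Set.compl_inter, Set.compl_iInter, Set.compl_ofPred, not_le]
  calc μ ({x | h < e.partialNormSq (k 0) x} ∪
        ⋃ j : ℕ, {x | 1 / ((j : ℝ) + 1) < e.tailNormSq (k j) x})
      ≤ μ {x | h < e.partialNormSq (k 0) x}
          + ∑' j : ℕ, μ {x | 1 / ((j : ℝ) + 1) < e.tailNormSq (k j) x} :=
        (measure_union_le _ _).trans (add_le_add_right (measure_iUnion_le _) _)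
    _ ≤ c 0 + ∑' j, c (j + 1) :=
        add_le_add ((le_biSup (fun ν : Measure H => ν _) hμ).trans hh.le)
          (ENNReal.tsum_le_tsum fun j =>
            (le_biSup (fun ν : Measure H => ν _) hμ).trans (hk j).le)
    _ = ∑' j, c j := (tsum_eq_zero_add' ENNReal.summable).symm
    _ ≤ ε := hc.le

theorem isTightMeasureSet_iff [CompleteSpace H] [MeasurableSpace H] {S : Set (Measure H)} :
    IsTightMeasureSet S ↔
      (∀ k, Tendsto (fun h : ℝ => ⨆ μ ∈ S, μ {x | h < e.partialNormSq k x}) atTop (𝓝 0)) ∧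
        ∀ ε > 0, Tendsto (fun k => ⨆ μ ∈ S, μ {x | ε < e.tailNormSq k x}) atTop (𝓝 0) :=
  ⟨fun hS => ⟨fun k => hS.tendsto_iSup_measure (e.tendsto_setOf_lt_partialNormSq_smallSets k),
      fun _ hε => hS.tendsto_iSup_measure (e.tendsto_setOf_lt_tailNormSq_smallSets hε)⟩,
    fun h => e.isTightMeasureSet_of_tendsto h.1 h.2⟩

end HilbertBasis

theorem stmt16_general
    {𝕜 : Type*} [RCLike 𝕜]
    {H : Type*} [NormedAddCommGroup H] [InnerProductSpace 𝕜 H] [CompleteSpace H]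
    [MeasurableSpace H] [BorelSpace H]
    (e : HilbertBasis ℕ 𝕜 H)
    (P : ℕ → Measure H) [∀ T, IsProbabilityMeasure (P T)] :
    (∀ δ : ℝ, 0 < δ →
        ∃ K : Set H, IsCompact K ∧ ∀ T, ENNReal.ofReal (1 - δ) ≤ P T K) ↔
      ((∀ k : ℕ,
          Tendsto (fun h : ℝ => ⨆ T, P T
              {x : H | h < ∑ n ∈ Finset.range k, ‖(inner 𝕜 (e n) x : 𝕜)‖ ^ 2})
            atTop (𝓝 0)) ∧
        (∀ ε : ℝ, 0 < ε →
          Tendsto (fun k : ℕ => ⨆ T, P T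
              {x : H | ε < ∑' n : ℕ, if k ≤ n then ‖(inner 𝕜 (e n) x : 𝕜)‖ ^ 2 else 0})
            atTop (𝓝 0))) := by
  rw [← isTightMeasureSet_range_iff_ofReal_le, e.isTightMeasureSet_iff]
  simp only [iSup_range]
  rfl

/-- Tightness criterion on a separable Hilbert space with orthonormal basis `(e_n)`:
a family of Borel probability measures is tight iff the finite-dimensional coordinate masses
are uniformly bounded in probability and the tails `Σ_{n≥k}|⟨x,e_n⟩|²` are uniformly small. -/
theorem stmt16
    {𝕜 : Type*} [RCLike 𝕜]
    {H : Type*} [NormedAddCommGroup H] [InnerProductSpace 𝕜 H] [CompleteSpace H]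
    [SecondCountableTopology H] [MeasurableSpace H] [BorelSpace H]
    (e : HilbertBasis ℕ 𝕜 H)
    (P : ℕ → Measure H) [∀ T, IsProbabilityMeasure (P T)] :
    (∀ δ : ℝ, 0 < δ →
        ∃ K : Set H, IsCompact K ∧ ∀ T, ENNReal.ofReal (1 - δ) ≤ P T K) ↔
      ((∀ k : ℕ,
          Tendsto (fun h : ℝ => ⨆ T, P T
              {x : H | h < ∑ n ∈ Finset.range k, ‖(inner 𝕜 (e n) x : 𝕜)‖ ^ 2})
            atTop (𝓝 0)) ∧
        (∀ ε : ℝ, 0 < ε →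
          Tendsto (fun k : ℕ => ⨆ T, P T
              {x : H | ε < ∑' n : ℕ, if k ≤ n then ‖(inner 𝕜 (e n) x : 𝕜)‖ ^ 2 else 0})
            atTop (𝓝 0))) :=
  stmt16_general e P
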